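/- arXiv:2510.19399 — 2 statements merged into one kernel-verified Lean document; each statement's English description precedes it below -/
import Mathlib

section
/- Let f : ℝ^P → ℝ be differentiable, bounded below by f_inf, with L-Lipschitz gradient. For gradient descent iterates ω_{k+1} = ω_k - η∇f(ω_k) with constant step size η ∈ (0, 2/L), the gradient norms converge to zero: lim_{k→∞} ‖∇f(ω_k)‖ = 0. -/
open Filter

theorem gradient_descent_grad_tendsto_zero (P : ℕ) (f : EuclideanSpace ℝ (Fin P) → ℝ)
    (hdiff : Differentiable ℝ f) (L : ℝ) (hL : 0 < L)
    (hlip : ∀ x y, ‖gradient f x - gradient f y‖ ≤ L * ‖x - y‖)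
    (finf : ℝ) (hbdd : ∀ x, finf ≤ f x)
    (η : ℝ) (hη0 : 0 < η) (hη : η < 2 / L)
    (ω : ℕ → EuclideanSpace ℝ (Fin P))
    (hiter : ∀ k, ω (k + 1) = ω k - η • gradient f (ω k)) :
    Tendsto (fun k => ‖gradient f (ω k)‖) atTop (nhds 0) := by
  -- gradient is continuous
  have hgc : Continuous (gradient f) := by
    have : LipschitzWith (Real.toNNReal L) (gradient f) := by
      apply LipschitzWith.of_dist_le_mul
      intro x y
      simpa [dist_eq_norm, Real.coe_toNNReal L hL.le] using hlip x y
    exact this.continuous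
  -- key descent inequality
  have key : ∀ x v : EuclideanSpace ℝ (Fin P),
      f (x + v) ≤ f x + inner ℝ (gradient f x) v + L / 2 * ‖v‖ ^ 2 := by
    intro x v
    set g : ℝ → ℝ := fun t => f (x + t • v) with hg
    have hderiv : ∀ t : ℝ, HasDerivAt g (inner ℝ (gradient f (x + t • v)) v : ℝ) t := by
      intro t
      have hγ : HasDerivAt (fun t : ℝ => x + t • v) v t := by
        simpa using ((hasDerivAt_id t).smul_const v).const_add x
      have hf := ((hdiff (x + t • v)).hasGradientAt.hasFDerivAt).comp_hasDerivAt t hγ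
      exact hf
    have hcont : Continuous fun t : ℝ => (inner ℝ (gradient f (x + t • v)) v : ℝ) := by
      exact (hgc.comp (continuous_const.add (continuous_id.smul continuous_const))).inner continuous_const
    have hint : ∀ a b : ℝ, IntervalIntegrable
        (fun t : ℝ => (inner ℝ (gradient f (x + t • v)) v : ℝ)) MeasureTheory.volume a b :=
      fun a b => hcont.intervalIntegrable a b
    have heq : ∫ t in (0:ℝ)..1, (inner ℝ (gradient f (x + t • v)) v : ℝ) = g 1 - g 0 :=
      intervalIntegral.integral_eq_sub_of_hasDerivAt (fun t _ => hderiv t) (hint 0 1)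
    have hbound : ∫ t in (0:ℝ)..1, (inner ℝ (gradient f (x + t • v)) v : ℝ)
        ≤ ∫ t in (0:ℝ)..1, (inner ℝ (gradient f x) v + L * t * ‖v‖ ^ 2) := by
      apply intervalIntegral.integral_mono_on (by norm_num) (hint 0 1)
      · exact ((continuous_const.add ((continuous_const.mul continuous_id).mul continuous_const)).intervalIntegrable 0 1)
      · intro t ht
        have h1 : (inner ℝ (gradient f (x + t • v)) v : ℝ) - inner ℝ (gradient f x) v
            = inner ℝ (gradient f (x + t • v) - gradient f x) v := by
          rw [inner_sub_left]
        have h2 : (inner ℝ (gradient f (x + t • v) - gradient f x) v : ℝ)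
            ≤ ‖gradient f (x + t • v) - gradient f x‖ * ‖v‖ :=
          real_inner_le_norm _ _
        have h3 : ‖gradient f (x + t • v) - gradient f x‖ ≤ L * (t * ‖v‖) := by
          have := hlip (x + t • v) x
          simpa [norm_smul, abs_of_nonneg ht.1] using this
        nlinarith [norm_nonneg v, mul_le_mul_of_nonneg_right h3 (norm_nonneg v)]
    have hI : ∫ t in (0:ℝ)..1, (inner ℝ (gradient f x) v + L * t * ‖v‖ ^ 2 : ℝ)
        = inner ℝ (gradient f x) v + L / 2 * ‖v‖ ^ 2 := by
      have e1 : (fun t : ℝ => (inner ℝ (gradient f x) v + L * t * ‖v‖ ^ 2 : ℝ))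
          = fun t : ℝ => inner ℝ (gradient f x) v + (L * ‖v‖ ^ 2) * t := by
        funext t; ring
      rw [e1]
      have h2i : IntervalIntegrable (fun t : ℝ => (L * ‖v‖ ^ 2) * t) MeasureTheory.volume 0 1 :=
        (continuous_const.mul continuous_id : Continuous fun t : ℝ => (L * ‖v‖ ^ 2) * t).intervalIntegrable 0 1
      rw [intervalIntegral.integral_add
        ((continuous_const (y := (inner ℝ (gradient f x) v : ℝ))).intervalIntegrable 0 1) h2i,
        intervalIntegral.integral_const_mul, integral_id, intervalIntegral.integral_const]
      simp; ring
    have hfin : g 1 - g 0 ≤ inner ℝ (gradient f x) v + L / 2 * ‖v‖ ^ 2 := by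
      rw [← heq]; rw [hI] at hbound; exact hbound
    have hg1 : g 1 = f (x + v) := by simp [hg]
    have hg0 : g 0 = f x := by simp [hg]
    rw [hg1, hg0] at hfin; linarith
  -- per-step decrease
  set c : ℝ := η * (1 - L * η / 2) with hc
  have hcpos : 0 < c := by
    have : L * η < 2 := by
      have := (lt_div_iff₀ hL).mp hη; linarith [this]
    apply mul_pos hη0; linarith
  have hstep : ∀ k, c * ‖gradient f (ω k)‖ ^ 2 ≤ f (ω k) - f (ω (k + 1)) := by
    intro k
    have := key (ω k) (-(η • gradient f (ω k)))
    rw [← sub_eq_add_neg, ← hiter k] at this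
    have hin : (inner ℝ (gradient f (ω k)) (-(η • gradient f (ω k))) : ℝ)
        = -(η * ‖gradient f (ω k)‖ ^ 2) := by
      rw [inner_neg_right, inner_smul_right, real_inner_self_eq_norm_sq]
      try ring
    rw [hin] at this
    have hn : ‖-(η • gradient f (ω k))‖ ^ 2 = η ^ 2 * ‖gradient f (ω k)‖ ^ 2 := by
      rw [norm_neg, norm_smul, mul_pow]
      congr 1
      rw [Real.norm_eq_abs, sq_abs]
    rw [hn] at this
    simp only [hc]; nlinarith [this]
  -- partial sums bounded
  have hsum : ∀ n, ∑ k ∈ Finset.range n, ‖gradient f (ω k)‖ ^ 2 ≤ (f (ω 0) - finf) / c := by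
    intro n
    have htel : ∑ k ∈ Finset.range n, (f (ω k) - f (ω (k + 1))) = f (ω 0) - f (ω n) :=
      Finset.sum_range_sub' (fun k => f (ω k)) n
    have h1 : c * ∑ k ∈ Finset.range n, ‖gradient f (ω k)‖ ^ 2 ≤ f (ω 0) - f (ω n) := by
      rw [← htel, Finset.mul_sum]
      exact Finset.sum_le_sum fun k _ => hstep k
    have h2 : f (ω 0) - f (ω n) ≤ f (ω 0) - finf := by linarith [hbdd (ω n)]
    rw [mul_comm, ← le_div_iff₀ hcpos] at h1
    exact h1.trans (by gcongr)
  -- summability and conclusion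
  have hsummable : Summable fun k => ‖gradient f (ω k)‖ ^ 2 :=
    summable_of_sum_range_le (fun k => sq_nonneg _) hsum
  have hsq : Tendsto (fun k => ‖gradient f (ω k)‖ ^ 2) atTop (nhds 0) :=
    hsummable.tendsto_atTop_zero
  have := (Real.continuous_sqrt.tendsto 0).comp hsq
  simp only [Function.comp_def, Real.sqrt_sq (norm_nonneg _), Real.sqrt_zero] at this
  exact this
end

section
/- Under the hypotheses of the gradient convergence theorem, the sum of squared gradient norms along gradient descent iterates is finite: Σ_{k=0}^∞ ‖∇f(ω_k)‖² ≤ (f(ω₀) - f_inf)/(η(1 - Lη/2)). -/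
open intervalIntegral

lemma descent_lemma {P : ℕ} (f : EuclideanSpace ℝ (Fin P) → ℝ)
    (hdiff : Differentiable ℝ f) (L : ℝ)
    (hlip : ∀ x y, ‖gradient f x - gradient f y‖ ≤ L * ‖x - y‖)
    (x y : EuclideanSpace ℝ (Fin P)) :
    f y ≤ f x + (inner ℝ (gradient f x) (y - x) : ℝ) + L / 2 * ‖y - x‖ ^ 2 := by
  set v := y - x with hv
  set γ : ℝ → EuclideanSpace ℝ (Fin P) := fun t => x + t • v with hγdef
  have hγ : ∀ t : ℝ, HasDerivAt γ v t := by
    intro t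
    have h := ((hasDerivAt_id' t).smul_const v).const_add x
    rw [one_smul] at h
    exact h
  set g' : ℝ → ℝ := fun t => (inner ℝ (gradient f (γ t)) v : ℝ) with hg'def
  have hg : ∀ t : ℝ, HasDerivAt (fun t => f (γ t)) (g' t) t := by
    intro t
    have h1 : HasFDerivAt f (InnerProductSpace.toDual ℝ _ (gradient f (γ t))) (γ t) :=
      (hdiff (γ t)).hasGradientAt.hasFDerivAt
    exact (h1.comp_hasDerivAt t (hγ t)).congr_deriv (by simp [hg'def])
  have hgradcont : Continuous (gradient f) := by
    have : LipschitzWith (Real.toNNReal L) (gradient f) := by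
      apply LipschitzWith.of_dist_le_mul
      intro a b
      rw [dist_eq_norm, dist_eq_norm]
      refine (hlip a b).trans ?_
      have := Real.le_coe_toNNReal L
      have hnn : (0:ℝ) ≤ ‖a - b‖ := norm_nonneg _
      nlinarith
    exact this.continuous
  have hcont : Continuous g' := by
    apply Continuous.inner
    · exact hgradcont.comp (continuous_const.add (continuous_id.smul continuous_const))
    · exact continuous_const
  have hint : IntervalIntegrable g' MeasureTheory.volume 0 1 :=
    hcont.intervalIntegrable 0 1
  have key : f y - f x = ∫ t in (0:ℝ)..1, g' t := by
    rw [integral_eq_sub_of_hasDerivAt (fun t _ => hg t) hint]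
    simp [hγdef, hv]
  have hbound : ∀ t ∈ Set.Icc (0:ℝ) 1, g' t ≤ g' 0 + (L * ‖v‖ ^ 2) * t := by
    intro t ht
    have h1 : g' t - g' 0 = (inner ℝ (gradient f (γ t) - gradient f (γ 0)) v : ℝ) := by
      simp [hg'def, inner_sub_left]
    have h2 : (inner ℝ (gradient f (γ t) - gradient f (γ 0)) v : ℝ) ≤
        ‖gradient f (γ t) - gradient f (γ 0)‖ * ‖v‖ := real_inner_le_norm _ _
    have h3 : ‖gradient f (γ t) - gradient f (γ 0)‖ ≤ L * ‖γ t - γ 0‖ := hlip _ _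
    have h4 : ‖γ t - γ 0‖ = t * ‖v‖ := by
      simp [hγdef, norm_smul, abs_of_nonneg ht.1]
    have hvnn : (0:ℝ) ≤ ‖v‖ := norm_nonneg _
    nlinarith [h2, h3.trans_eq (by rw [h4]), sq_nonneg ‖v‖]
  have hint2 : IntervalIntegrable (fun t => g' 0 + (L * ‖v‖ ^ 2) * t)
      MeasureTheory.volume 0 1 := (continuous_const.add ((continuous_const.mul continuous_id))).intervalIntegrable 0 1
  have hmono : (∫ t in (0:ℝ)..1, g' t) ≤ ∫ t in (0:ℝ)..1, (g' 0 + (L * ‖v‖ ^ 2) * t) :=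
    integral_mono_on (by norm_num) hint hint2 hbound
  have hcalc : (∫ t in (0:ℝ)..1, (g' 0 + (L * ‖v‖ ^ 2) * t)) = g' 0 + L / 2 * ‖v‖ ^ 2 := by
    rw [integral_add intervalIntegrable_const (intervalIntegrable_id.const_mul _),
      integral_const, integral_const_mul, integral_id]
    simp [smul_eq_mul]
    ring
  have : f y - f x ≤ g' 0 + L / 2 * ‖v‖ ^ 2 := by
    rw [key]; exact hmono.trans hcalc.le
  have hg0 : g' 0 = (inner ℝ (gradient f x) v : ℝ) := by simp [hg'def, hγdef]
  rw [hg0] at this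
  linarith

theorem gradient_descent_sum_sq_grad_finite (P : ℕ) (f : EuclideanSpace ℝ (Fin P) → ℝ)
    (hdiff : Differentiable ℝ f) (L : ℝ) (hL : 0 < L)
    (hlip : ∀ x y, ‖gradient f x - gradient f y‖ ≤ L * ‖x - y‖)
    (finf : ℝ) (hbdd : ∀ x, finf ≤ f x)
    (η : ℝ) (hη0 : 0 < η) (hη : η < 2 / L)
    (ω : ℕ → EuclideanSpace ℝ (Fin P))
    (hiter : ∀ k, ω (k + 1) = ω k - η • gradient f (ω k)) :
    Summable (fun k => ‖gradient f (ω k)‖ ^ 2) ∧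
      ∑' k, ‖gradient f (ω k)‖ ^ 2 ≤ (f (ω 0) - finf) / (η * (1 - L * η / 2)) := by
  set c := η * (1 - L * η / 2) with hc
  have hc0 : 0 < c := by
    have : L * η < 2 := by
      have := (lt_div_iff₀ hL).1 hη
      linarith [mul_comm η L]
    apply mul_pos hη0
    linarith
  have step : ∀ k, c * ‖gradient f (ω k)‖ ^ 2 ≤ f (ω k) - f (ω (k + 1)) := by
    intro k
    have hd := descent_lemma f hdiff L hlip (ω k) (ω (k + 1))
    have hsub : ω (k + 1) - ω k = (-η) • gradient f (ω k) := by
      rw [hiter k]; module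
    rw [hsub] at hd
    have hip : (inner ℝ (gradient f (ω k)) ((-η) • gradient f (ω k)) : ℝ)
        = -η * ‖gradient f (ω k)‖ ^ 2 := by
      rw [real_inner_smul_right, real_inner_self_eq_norm_sq]
    have hns : ‖(-η) • gradient f (ω k)‖ ^ 2 = η ^ 2 * ‖gradient f (ω k)‖ ^ 2 := by
      rw [norm_smul]
      simp [abs_of_pos hη0, mul_pow]
    rw [hip, hns] at hd
    nlinarith [hd]
  have hpart : ∀ n, ∑ k ∈ Finset.range n, c * ‖gradient f (ω k)‖ ^ 2 ≤ f (ω 0) - f (ω n) := by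
    intro n
    induction n with
    | zero => simp
    | succ n ih =>
      rw [Finset.sum_range_succ]
      linarith [step n]
  have hpart' : ∀ n, ∑ k ∈ Finset.range n, ‖gradient f (ω k)‖ ^ 2
      ≤ (f (ω 0) - finf) / c := by
    intro n
    rw [le_div_iff₀ hc0]
    calc (∑ k ∈ Finset.range n, ‖gradient f (ω k)‖ ^ 2) * c
        = ∑ k ∈ Finset.range n, c * ‖gradient f (ω k)‖ ^ 2 := by
          rw [Finset.sum_mul]; congr 1; ext k; ring
      _ ≤ f (ω 0) - f (ω n) := hpart n
      _ ≤ f (ω 0) - finf := by linarith [hbdd (ω n)]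
  have hnn : ∀ k, 0 ≤ ‖gradient f (ω k)‖ ^ 2 := fun k => sq_nonneg _
  exact ⟨summable_of_sum_range_le hnn hpart', Summable.tsum_le_of_sum_range_le (summable_of_sum_range_le hnn hpart') hpart'⟩
end
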